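/- Let G be a directed mixed graph over micro-nodes X and let P be a partition of X inducing the coarse graph co(G,P). Suppose either (a) every strongly connected component of G is contained in some group of P, and for every adjacent pair of edges e = (W,Y), e' = (Y,Z) of co(G,P) and every y ∈ bd_e(Y) there exists y' ∈ bd_{e'}(Y) with sc_G(y) = sc_G(y'); or (b) every strongly connected component of G is contained in some group of P, and for every adjacent pair of edges e = W → Y (or e = W ↔ Y) and e' = Y → Z of co(G,P) and every y ∈ bd_e(Y) there exist y' ∈ bd_{e'}(Y) and a (possibly trivial) directed path y → … → y' in G all of whose nodes lie in Y. Then every apparent cause of a group Z ∈ P is a true cause of Z. -/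

import Mathlib

/-! ## Mixed graphs -/

/-- A mixed graph: directed, bidirected and undirected edges, no self-edges. -/
structure MixedGraph (V : Type) where
  dir : V → V → Prop
  bidir : V → V → Prop
  undir : V → V → Prop
  bidir_symm : ∀ {a b}, bidir a b → bidir b a
  undir_symm : ∀ {a b}, undir a b → undir b a
  dir_irrefl : ∀ a, ¬ dir a a
  bidir_irrefl : ∀ a, ¬ bidir a a
  undir_irrefl : ∀ a, ¬ undir a a

namespace MixedGraph

variable {V I : Type}

/-- A directed mixed graph is a mixed graph without undirected edges. -/
def IsDMG (G : MixedGraph V) : Prop := ∀ a b, ¬ G.undir a b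

/-- `a` and `b` lie in the same strongly connected component: there are directed
paths between them in both directions. -/
def Strongly (G : MixedGraph V) (a b : V) : Prop :=
  Relation.ReflTransGen G.dir a b ∧ Relation.ReflTransGen G.dir b a

lemma Strongly.refl (G : MixedGraph V) (a : V) : G.Strongly a a :=
  ⟨Relation.ReflTransGen.refl, Relation.ReflTransGen.refl⟩

lemma Strongly.symm {G : MixedGraph V} {a b : V} (h : G.Strongly a b) : G.Strongly b a :=
  ⟨h.2, h.1⟩

/-- A graph is acyclic if it has no nontrivial directed closed walk. -/
def Acyclic (G : MixedGraph V) : Prop := ∀ a, ¬ Relation.TransGen G.dir a a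

end MixedGraph

/-! ## Walks -/

/-- The four ways in which an edge can occur on a walk, as traversed from its
first node `a` to its second node `b`: `fw` is `a → b`, `bw` is `a ← b`,
`bi` is `a ↔ b` and `un` is `a − b`. -/
inductive StepKind | fw | bw | bi | un
deriving DecidableEq

/-- A step of a walk: an ordered pair of nodes together with the kind of edge. -/
structure Step (V : Type) where
  a : V
  b : V
  k : StepKind

/-- The step is an actual edge of the graph `G`. -/
def Step.ok {V : Type} (G : MixedGraph V) (s : Step V) : Prop :=
  match s.k with
  | .fw => G.dir s.a s.b
  | .bw => G.dir s.b s.a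
  | .bi => G.bidir s.a s.b
  | .un => G.undir s.a s.b

/-- The edge of the step has an arrowhead at its first node. -/
def Step.headA {V : Type} (s : Step V) : Prop := s.k = .bw ∨ s.k = .bi

/-- The edge of the step has an arrowhead at its second node. -/
def Step.headB {V : Type} (s : Step V) : Prop := s.k = .fw ∨ s.k = .bi

namespace MixedGraph

variable {V I : Type}

/-- `IsWalk G x y L`: the list of steps `L` forms a walk from `x` to `y` in `G`. -/
inductive IsWalk (G : MixedGraph V) : V → V → List (Step V) → Prop
  | nil (a : V) : IsWalk G a a []
  | cons {c : V} (s : Step V) (L : List (Step V)) (hok : s.ok G)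
      (hw : IsWalk G s.b c L) : IsWalk G s.a c (s :: L)

/-- `v` is a collider at junction `i` of the walk `L`: both edges adjacent to the
inner node `v` point into `v`. -/
def ColliderAt (L : List (Step V)) (i : ℕ) (v : V) : Prop :=
  ∃ s t, L[i]? = some s ∧ L[i+1]? = some t ∧ s.b = v ∧ t.a = v ∧ s.headB ∧ t.headA

/-- `v` is a non-collider at junction `i` of the walk `L`. -/
def NonColliderAt (L : List (Step V)) (i : ℕ) (v : V) : Prop :=
  ∃ s t, L[i]? = some s ∧ L[i+1]? = some t ∧ s.b = v ∧ t.a = v ∧ ¬ (s.headB ∧ t.headA)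

/-- The walk `L` from `x` to `y` is m-blocked by the node set `S`. -/
def MBlockedWalk (G : MixedGraph V) (S : Set V) (x y : V) (L : List (Step V)) : Prop :=
  x ∈ S ∨ y ∈ S ∨
  (∃ i v, ColliderAt L i v ∧ ∀ d, Relation.ReflTransGen G.dir v d → d ∉ S) ∨
  (∃ i v, NonColliderAt L i v ∧ v ∈ S)

/-- The walk `L` from `x` to `y` is σ-blocked by the node set `S`. -/
def SigmaBlockedWalk (G : MixedGraph V) (S : Set V) (x y : V) (L : List (Step V)) : Prop :=
  x ∈ S ∨ y ∈ S ∨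
  (∃ i v, ColliderAt L i v ∧ ∀ d, Relation.ReflTransGen G.dir v d → d ∉ S) ∨
  (∃ i s t, L[i]? = some s ∧ L[i+1]? = some t ∧ s.b = t.a ∧ ¬ (s.headB ∧ t.headA) ∧
    s.b ∈ S ∧
    (((s.k = .bw ∨ s.k = .un) ∧ ¬ G.Strongly s.b s.a) ∨
     ((t.k = .fw ∨ t.k = .un) ∧ ¬ G.Strongly t.a t.b)))

/-- `x` and `y` are m-separated by `S` in `G`. -/
def MSep (G : MixedGraph V) (S : Set V) (x y : V) : Prop :=
  ∀ L, G.IsWalk x y L → G.MBlockedWalk S x y L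

/-- `x` and `y` are σ-separated by `S` in `G`. -/
def SigmaSep (G : MixedGraph V) (S : Set V) (x y : V) : Prop :=
  ∀ L, G.IsWalk x y L → G.SigmaBlockedWalk S x y L

/-! ## Acyclification -/

/-- The acyclification of a mixed graph. -/
def acy (G : MixedGraph V) : MixedGraph V where
  dir a b := (∃ c, G.dir a c ∧ G.Strongly c b) ∧ ¬ G.Strongly a b
  bidir a b := a ≠ b ∧ (G.Strongly a b ∨
    ∃ a' b', G.Strongly a a' ∧ G.Strongly b b' ∧ G.bidir a' b')
  undir a b := ¬ G.Strongly a b ∧ G.undir a b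
  bidir_symm := by
    rintro a b ⟨hab, h | ⟨a', b', ha, hb, h⟩⟩
    · exact ⟨hab.symm, Or.inl h.symm⟩
    · exact ⟨hab.symm, Or.inr ⟨b', a', hb, ha, G.bidir_symm h⟩⟩
  undir_symm := by
    rintro a b ⟨h1, h2⟩
    exact ⟨fun h => h1 h.symm, G.undir_symm h2⟩
  dir_irrefl := fun a h => h.2 (Strongly.refl G a)
  bidir_irrefl := fun a h => h.1 rfl
  undir_irrefl := fun a h => h.1 (Strongly.refl G a)

/-! ## Coarse graphs -/

/-- The coarse (quotient) graph of `G` with respect to the partition given by the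
quotient map `q` onto the set of groups `I`. -/
def coarse (G : MixedGraph V) (q : V → I) : MixedGraph I where
  dir Y Z := Y ≠ Z ∧ ∃ y z, q y = Y ∧ q z = Z ∧ G.dir y z
  bidir Y Z := Y ≠ Z ∧ ∃ y z, q y = Y ∧ q z = Z ∧ G.bidir y z
  undir Y Z := Y ≠ Z ∧ ∃ y z, q y = Y ∧ q z = Z ∧ G.undir y z
  bidir_symm := by
    rintro Y Z ⟨hne, y, z, hy, hz, h⟩
    exact ⟨hne.symm, z, y, hz, hy, G.bidir_symm h⟩
  undir_symm := by
    rintro Y Z ⟨hne, y, z, hy, hz, h⟩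
    exact ⟨hne.symm, z, y, hz, hy, G.undir_symm h⟩
  dir_irrefl := fun Y h => h.1 rfl
  bidir_irrefl := fun Y h => h.1 rfl
  undir_irrefl := fun Y h => h.1 rfl

end MixedGraph

/-- The boundary `bd_e` at the second group `e.b` of a macro edge `e` of the coarse
graph: the micro-nodes in the group `e.b` that are endpoints of a micro-edge of the
same type (and orientation) as `e` whose other endpoint lies in the group `e.a`. -/
def bdEnd {V I : Type} (G : MixedGraph V) (q : V → I) (e : Step I) : Set V :=
  {y | q y = e.b ∧ ∃ w, q w = e.a ∧ Step.ok G ⟨w, y, e.k⟩}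

/-- The boundary `bd_e` at the first group `e.a` of a macro edge `e` of the coarse
graph. -/
def bdStart {V I : Type} (G : MixedGraph V) (q : V → I) (e : Step I) : Set V :=
  {w | q w = e.a ∧ ∃ y, q y = e.b ∧ Step.ok G ⟨w, y, e.k⟩}

/-- A (possibly trivial) directed path from `x` to `y` all of whose nodes lie in
the set `A`. -/
def DirPathIn {V : Type} (G : MixedGraph V) (A : Set V) (x y : V) : Prop :=
  Relation.ReflTransGen (fun a b => G.dir a b ∧ a ∈ A ∧ b ∈ A) x y

/-!
A directed micro-edge `w → y` entering a group `Y` can always be continued: whenever `Y → Z`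
in the coarse graph, either hypothesis yields a directed micro-path from `y` to the tail of a
micro-edge `Y → Z`. Following a coarse directed path edge by edge therefore assembles a
directed micro-path ending in its last group.
-/

lemma DirPathIn.reflTransGen {V : Type} {G : MixedGraph V} {A : Set V} {x y : V}
    (h : DirPathIn G A x y) : Relation.ReflTransGen G.dir x y :=
  Relation.ReflTransGen.mono (fun _ _ hab => hab.1) _ _ h

namespace MixedGraph

variable {V I : Type}

def ForwardRelay (G : MixedGraph V) (q : V → I) : Prop :=
  ∀ ⦃w y : V⦄ ⦃Z : I⦄, q w ≠ q y → G.dir w y → (G.coarse q).dir (q y) Z →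
    ∃ y' z, q y' = q y ∧ q z = Z ∧ G.dir y' z ∧ Relation.ReflTransGen G.dir y y'

lemma forwardRelay_of_strongly {G : MixedGraph V} {q : V → I}
    (h : ∀ e e' : Step I, Step.ok (G.coarse q) e → Step.ok (G.coarse q) e' →
      e.b = e'.a → ∀ y ∈ bdEnd G q e, ∃ y' ∈ bdStart G q e', G.Strongly y y') :
    G.ForwardRelay q := by
  intro w y Z hwy hdir hYZ
  obtain ⟨y', ⟨hy', z, hz, hdir'⟩, hyy'⟩ :=
    h ⟨q w, q y, .fw⟩ ⟨q y, Z, .fw⟩ ⟨hwy, w, y, rfl, rfl, hdir⟩ hYZ rfl y ⟨rfl, w, rfl, hdir⟩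
  exact ⟨y', z, hy', hz, hdir', hyy'.1⟩

lemma forwardRelay_of_dirPathIn {G : MixedGraph V} {q : V → I}
    (h : ∀ e e' : Step I, Step.ok (G.coarse q) e → Step.ok (G.coarse q) e' →
      e.b = e'.a → (e.k = .fw ∨ e.k = .bi) → e'.k = .fw →
      ∀ y ∈ bdEnd G q e, ∃ y' ∈ bdStart G q e', DirPathIn G {v | q v = e.b} y y') :
    G.ForwardRelay q := by
  intro w y Z hwy hdir hYZ
  obtain ⟨y', ⟨hy', z, hz, hdir'⟩, hyy'⟩ :=
    h ⟨q w, q y, .fw⟩ ⟨q y, Z, .fw⟩ ⟨hwy, w, y, rfl, rfl, hdir⟩ hYZ rfl (.inl rfl) rfl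
      y ⟨rfl, w, rfl, hdir⟩
  exact ⟨y', z, hy', hz, hdir', hyy'.reflTransGen⟩

lemma ForwardRelay.exists_reflTransGen {G : MixedGraph V} {q : V → I}
    (hG : G.ForwardRelay q) {w y : V} (hwy : q w ≠ q y) (hdir : G.dir w y) {Z : I}
    (hpath : Relation.ReflTransGen (G.coarse q).dir (q y) Z) :
    ∃ z, q z = Z ∧ Relation.ReflTransGen G.dir y z := by
  generalize hY : q y = Y at hpath
  induction hpath using Relation.ReflTransGen.head_induction_on generalizing w y with
  | refl => exact ⟨y, hY, .refl⟩
  | head hYZ _ ih =>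
    subst hY
    obtain ⟨y', z, hy', rfl, hdir', hyy'⟩ := hG hwy hdir hYZ
    obtain ⟨t, ht, hzt⟩ := ih (hy' ▸ hYZ.1) hdir' rfl
    exact ⟨t, ht, hyy'.trans (.head hdir' hzt)⟩

end MixedGraph

open MixedGraph in
theorem apparent_cause_is_true_cause_general {V I : Type} (G : MixedGraph V)
    (q : V → I) (hq : Function.Surjective q)
    (h : ((∀ a b, G.Strongly a b → q a = q b) ∧
          (∀ e e' : Step I, Step.ok (G.coarse q) e → Step.ok (G.coarse q) e' →
            e.b = e'.a → ∀ y ∈ bdEnd G q e, ∃ y' ∈ bdStart G q e',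
              G.Strongly y y'))
       ∨ ((∀ a b, G.Strongly a b → q a = q b) ∧
          (∀ e e' : Step I, Step.ok (G.coarse q) e → Step.ok (G.coarse q) e' →
            e.b = e'.a → (e.k = .fw ∨ e.k = .bi) → e'.k = .fw →
            ∀ y ∈ bdEnd G q e, ∃ y' ∈ bdStart G q e',
              DirPathIn G {v | q v = e.b} y y'))) :
    ∀ Y Z : I, Relation.ReflTransGen (G.coarse q).dir Y Z →
      ∃ y z, q y = Y ∧ q z = Z ∧ Relation.ReflTransGen G.dir y z := by
  have hG : G.ForwardRelay q := by
    rcases h with ⟨-, ha⟩ | ⟨-, hb⟩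
    · exact forwardRelay_of_strongly ha
    · exact forwardRelay_of_dirPathIn hb
  intro Y Z hpath
  rcases hpath.cases_head with rfl | ⟨Y', ⟨hYY', y, y', rfl, rfl, hdir⟩, hrest⟩
  · obtain ⟨y, rfl⟩ := hq Y
    exact ⟨y, y, rfl, rfl, .refl⟩
  · obtain ⟨z, hz, hy'z⟩ := hG.exists_reflTransGen hYY' hdir hrest
    exact ⟨y, z, rfl, hz, .head hdir hy'z⟩

open MixedGraph in
/-- Let `G` be a directed mixed graph and `q` a partition of its
nodes. Suppose either (a) every strongly connected component of `G` is contained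
in a group, and for every adjacent pair of edges `e = (W,Y)`, `e' = (Y,Z)` of the
coarse graph every `y ∈ bd_e(Y)` has some `y' ∈ bd_{e'}(Y)` in the same strongly
connected component of `G`; or (b) every strongly connected component of `G` is
contained in a group, and for every adjacent right-directed (almost) mediator pair
`e = W → Y` (or `e = W ↔ Y`), `e' = Y → Z` every `y ∈ bd_e(Y)` is connected to
some `y' ∈ bd_{e'}(Y)` by a (possibly trivial) directed path inside `Y`. Then
every apparent cause of a group `Z` is a true cause of `Z`: a directed path
`Y → … → Z` on the coarse graph implies a directed micro-path `y → … → z` on `G`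
with `q y = Y` and `q z = Z`. -/
theorem apparent_cause_is_true_cause {V I : Type} (G : MixedGraph V)
    (hDMG : G.IsDMG) (q : V → I) (hq : Function.Surjective q)
    (h : ((∀ a b, G.Strongly a b → q a = q b) ∧
          (∀ e e' : Step I, Step.ok (G.coarse q) e → Step.ok (G.coarse q) e' →
            e.b = e'.a → ∀ y ∈ bdEnd G q e, ∃ y' ∈ bdStart G q e',
              G.Strongly y y'))
       ∨ ((∀ a b, G.Strongly a b → q a = q b) ∧
          (∀ e e' : Step I, Step.ok (G.coarse q) e → Step.ok (G.coarse q) e' →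
            e.b = e'.a → (e.k = .fw ∨ e.k = .bi) → e'.k = .fw →
            ∀ y ∈ bdEnd G q e, ∃ y' ∈ bdStart G q e',
              DirPathIn G {v | q v = e.b} y y'))) :
    ∀ Y Z : I, Relation.ReflTransGen (G.coarse q).dir Y Z →
      ∃ y z, q y = Y ∧ q z = Z ∧ Relation.ReflTransGen G.dir y z :=
  apparent_cause_is_true_cause_general G q hq h
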